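/- arXiv:1809.06141 — 6 statements merged into one kernel-verified Lean document; each statement's English description precedes it below -/
import Mathlib

section
/- For every dimension d ≥ 2 and every finite set 𝓛 of lattice lines in ℝ^d, there exist two distinct finite subsets F₁, F₂ of ℤ^d that are tomographically equivalent with respect to 𝓛; in particular, no finite set of lattice lines determines all finite lattice sets by their X-rays. -/
open Set

variable {d : ℕ}

/-- The affine line through the coset `T` of the modulo-`S` quotient, i.e. an affine
line parallel to `S` when `S` is 1-dimensional. -/
def fiber (S : Submodule ℝ (Fin d → ℝ)) (T : (Fin d → ℝ) ⧸ S) : Set (Fin d → ℝ) :=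
  {x | (Submodule.Quotient.mk x : (Fin d → ℝ) ⧸ S) = T}

/-- `F₁` and `F₂` have the same (discrete) X-ray parallel to `S`. -/
def XrayEq (S : Submodule ℝ (Fin d → ℝ)) (F₁ F₂ : Set (Fin d → ℝ)) : Prop :=
  ∀ T : (Fin d → ℝ) ⧸ S, (F₁ ∩ fiber S T).ncard = (F₂ ∩ fiber S T).ncard

/-- `F₁` and `F₂` are tomographically equivalent w.r.t. the family `𝒮` of lines. -/
def TomEq (𝒮 : Set (Submodule ℝ (Fin d → ℝ))) (F₁ F₂ : Set (Fin d → ℝ)) : Prop :=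
  ∀ S ∈ 𝒮, XrayEq S F₁ F₂

/-- A lattice line: a line through the origin spanned by a nonzero integer vector. -/
def IsLatticeLine (S : Submodule ℝ (Fin d → ℝ)) : Prop :=
  ∃ v : Fin d → ℤ, v ≠ 0 ∧ S = Submodule.span ℝ {fun i => (v i : ℝ)}

/-- The canonical embedding of `ℤ^d` into `ℝ^d`. -/
def embed (x : Fin d → ℤ) : Fin d → ℝ := fun i => (x i : ℝ)

/-- The X-ray difference `Δ_𝒮(F₁,F₂)`. -/
noncomputable def xrayDiff (𝒮 : Set (Submodule ℝ (Fin d → ℝ))) (F₁ F₂ : Set (Fin d → ℝ)) : ℕ :=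
  ∑ᶠ S ∈ 𝒮, ∑ᶠ T : (Fin d → ℝ) ⧸ S,
    (((F₁ ∩ fiber S T).ncard : ℤ) - ((F₂ ∩ fiber S T).ncard : ℤ)).natAbs

/-- A convex lattice set: `F = conv(F) ∩ ℤ^d`. -/
def IsConvexLatticeSet (F : Finset (Fin d → ℤ)) : Prop :=
  embed '' ↑F = convexHull ℝ (embed '' ↑F) ∩ Set.range (embed : (Fin d → ℤ) → (Fin d → ℝ))

/-! Induct on the set of lines. Suppose `F₁, F₂` have equal X-rays along `𝓛`, and let `u` be an
integer multiple of a direction of a new lattice line `S`, so large that `F₁ ∪ F₂` and its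
translate by `u` are disjoint. Then `F₁ ∪ (u + F₂)` and `F₂ ∪ (u + F₁)` still have equal X-rays
along `𝓛`, since every line meets the two halves separately, and also along `S`, since a line
parallel to `S` meets `u + F` exactly as it meets `F`. They are distinct because intersecting
with `F₁ ∪ F₂` recovers `F₁`, resp. `F₂`. -/

open scoped Pointwise

section Translation

variable {M : Type*} [AddCommGroup M] [DecidableEq M]

theorem exists_disjoint_vadd_zsmul [Module.IsTorsionFree ℤ M] (G : Finset M) {v : M}
    (hv : v ≠ 0) :
    ∃ k : ℤ, Disjoint G ((k • v) +ᵥ G) := by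
  obtain ⟨k, hk⟩ := Infinite.exists_notMem_finset
    ((G - G).preimage (· • v) (smul_left_injective ℤ hv).injOn)
  refine ⟨k, Finset.disjoint_left.mpr fun x hx hx' => hk ?_⟩
  obtain ⟨y, hy, rfl⟩ := Finset.mem_vadd_finset.mp hx'
  simpa using Finset.sub_mem_sub hx hy

theorem eq_of_union_vadd_eq_union_vadd {F₁ F₂ : Finset M} {u : M}
    (hdisj : Disjoint (F₁ ∪ F₂) (u +ᵥ (F₁ ∪ F₂))) (h : F₁ ∪ (u +ᵥ F₂) = F₂ ∪ (u +ᵥ F₁)) :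
    F₁ = F₂ := by
  have key {A B : Finset M} (hA : A ⊆ F₁ ∪ F₂) (hB : B ⊆ F₁ ∪ F₂) :
      (A ∪ (u +ᵥ B)) ∩ (F₁ ∪ F₂) = A := by
    rw [Finset.union_inter_distrib_right, Finset.inter_eq_left.mpr hA,
      Finset.disjoint_iff_inter_eq_empty.mp
        (hdisj.mono_right (Finset.vadd_finset_subset_vadd_finset hB)).symm, Finset.union_empty]
  simpa only [key Finset.subset_union_left Finset.subset_union_right,
    key Finset.subset_union_right Finset.subset_union_left] using congrArg (· ∩ (F₁ ∪ F₂)) h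

end Translation

section Xray

variable {S : Submodule ℝ (Fin d → ℝ)}

theorem vadd_fiber (w : Fin d → ℝ) (T : (Fin d → ℝ) ⧸ S) :
    w +ᵥ fiber S T = fiber S (T + Submodule.Quotient.mk w) := by
  ext x
  simp only [fiber, Set.mem_vadd_set_iff_neg_vadd_mem, Set.mem_ofPred_eq, vadd_eq_add,
    Submodule.Quotient.mk_add, Submodule.Quotient.mk_neg, neg_add_eq_iff_eq_add, add_comm]

theorem ncard_union_vadd_inter_fiber {A B : Set (Fin d → ℝ)} (hA : A.Finite) (hB : B.Finite)
    {w : Fin d → ℝ} (hAB : Disjoint A (w +ᵥ B)) (T : (Fin d → ℝ) ⧸ S) :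
    ((A ∪ (w +ᵥ B)) ∩ fiber S T).ncard
      = (A ∩ fiber S T).ncard + (B ∩ fiber S (T - Submodule.Quotient.mk w)).ncard := by
  have hshift : (w +ᵥ B) ∩ fiber S T = w +ᵥ (B ∩ fiber S (T - Submodule.Quotient.mk w)) := by
    rw [Set.vadd_set_inter, vadd_fiber, sub_add_cancel]
  rw [Set.union_inter_distrib_right,
    Set.ncard_union_eq (hAB.mono inter_subset_left inter_subset_left) (hA.inter_of_left _)
      (hB.vadd_set.inter_of_left _), hshift, Set.ncard_vadd_set]

theorem TomEq.insert_union_vadd {𝒮 : Set (Submodule ℝ (Fin d → ℝ))} {A₁ A₂ : Set (Fin d → ℝ)}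
    (h : TomEq 𝒮 A₁ A₂) (hA₁ : A₁.Finite) (hA₂ : A₂.Finite) {w : Fin d → ℝ} (hw : w ∈ S)
    (hdisj : Disjoint (A₁ ∪ A₂) (w +ᵥ (A₁ ∪ A₂))) :
    TomEq (insert S 𝒮) (A₁ ∪ (w +ᵥ A₂)) (A₂ ∪ (w +ᵥ A₁)) := by
  have h₁₂ : Disjoint A₁ (w +ᵥ A₂) :=
    hdisj.mono subset_union_left (Set.vadd_set_mono subset_union_right)
  have h₂₁ : Disjoint A₂ (w +ᵥ A₁) :=
    hdisj.mono subset_union_right (Set.vadd_set_mono subset_union_left)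
  rintro S' (rfl | hS') T <;>
    rw [ncard_union_vadd_inter_fiber hA₁ hA₂ h₁₂, ncard_union_vadd_inter_fiber hA₂ hA₁ h₂₁]
  · rw [(Submodule.Quotient.mk_eq_zero S').mpr hw, sub_zero, add_comm]
  · rw [h S' hS' T, h S' hS' _]

end Xray

theorem embed_injective : Function.Injective (embed (d := d)) :=
  fun _ _ h => funext fun i => Int.cast_injective (congrFun h i)

theorem embed_zsmul (k : ℤ) (x : Fin d → ℤ) : embed (k • x) = k • embed x :=
  map_zsmul (AddMonoidHom.compLeft (Int.castAddHom ℝ) (Fin d)) k x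

theorem image_embed_vadd (u : Fin d → ℤ) (s : Set (Fin d → ℤ)) :
    embed '' (u +ᵥ s) = embed u +ᵥ embed '' s :=
  Set.image_vadd_distrib (AddMonoidHom.compLeft (Int.castAddHom ℝ) (Fin d)) u s

theorem nonuniqueness_for_finitely_many_lattice_lines_general
    (d : ℕ) (𝓛 : Finset (Submodule ℝ (Fin d → ℝ)))
    (h𝓛 : ∀ S ∈ 𝓛, IsLatticeLine S) :
    ∃ F₁ F₂ : Finset (Fin d → ℤ), F₁ ≠ F₂ ∧
      TomEq (↑𝓛 : Set (Submodule ℝ (Fin d → ℝ))) (embed '' ↑F₁) (embed '' ↑F₂) := by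
  classical
  induction 𝓛 using Finset.induction_on with
  | empty => exact ⟨∅, {0}, (Finset.singleton_ne_empty 0).symm, by simp [TomEq]⟩
  | @insert S 𝓛 _ ih =>
    obtain ⟨F₁, F₂, hne, htom⟩ := ih fun S' h => h𝓛 S' (Finset.mem_insert_of_mem h)
    obtain ⟨v, hv, rfl⟩ := h𝓛 _ (Finset.mem_insert_self _ 𝓛)
    obtain ⟨k, hk⟩ := exists_disjoint_vadd_zsmul (F₁ ∪ F₂) hv
    refine ⟨F₁ ∪ ((k • v) +ᵥ F₂), F₂ ∪ ((k • v) +ᵥ F₁),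
      mt (eq_of_union_vadd_eq_union_vadd hk) hne, ?_⟩
    have hdisj : Disjoint (embed '' (F₁ : Set (Fin d → ℤ)) ∪ embed '' F₂)
        (embed (k • v) +ᵥ (embed '' (F₁ : Set (Fin d → ℤ)) ∪ embed '' F₂)) := by
      rw [← Set.image_union, ← image_embed_vadd, Set.disjoint_image_iff embed_injective]
      exact_mod_cast hk
    simp only [Finset.coe_insert, Finset.coe_union, Finset.coe_vadd_finset, Set.image_union,
      image_embed_vadd]
    exact htom.insert_union_vadd (F₁.finite_toSet.image _) (F₂.finite_toSet.image _)
      (embed_zsmul k v ▸ zsmul_mem (Submodule.mem_span_singleton_self _) k) hdisj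

theorem nonuniqueness_for_finitely_many_lattice_lines
    (d : ℕ) (hd : 2 ≤ d) (𝓛 : Finset (Submodule ℝ (Fin d → ℝ)))
    (h𝓛 : ∀ S ∈ 𝓛, IsLatticeLine S) :
    ∃ F₁ F₂ : Finset (Fin d → ℤ), F₁ ≠ F₂ ∧
      TomEq (↑𝓛 : Set (Submodule ℝ (Fin d → ℝ))) (embed '' ↑F₁) (embed '' ↑F₂) :=
  nonuniqueness_for_finitely_many_lattice_lines_general d 𝓛 h𝓛
end

section
/- (Rényi–Heppes) Let 𝒮 be a finite set of 1-dimensional linear subspaces of ℝ^d with |𝒮| = m. Then every finite set F ⊆ ℝ^d with |F| ≤ m − 1 is uniquely determined among finite subsets of ℝ^d by its X-rays parallel to the lines in 𝒮: if F' ⊆ ℝ^d is finite and tomographically equivalent to F with respect to 𝒮, then F' = F. -/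
open Set

variable {d : ℕ}

/-!
Put `A = F \ F'` and `B = F' \ F`; removing the common part `F ∩ F'` shows that `B` and `A` have
the same X-rays. A point `b ∈ B` then forces, on the line through `b` parallel to each `S ∈ 𝒮`, a
point `a ∈ A`; as `a ≠ b`, the line `S` is spanned by `a - b`. So `𝒮` lies in the image of `A`
under `a ↦ ℝ (a - b)`, and `m ≤ |A| ≤ |F| < m`. Hence `B = ∅`, and then every X-ray of `A` vanishes, so `A = ∅` as well.
-/

open Module

theorem mem_fiber_mk_iff {S : Submodule ℝ (Fin d → ℝ)} {x y : Fin d → ℝ} :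
    y ∈ fiber S (Submodule.Quotient.mk x) ↔ y - x ∈ S :=
  Submodule.Quotient.eq S

namespace XrayEq

variable {S : Submodule ℝ (Fin d → ℝ)} {F₁ F₂ : Set (Fin d → ℝ)}

theorem symm (h : XrayEq S F₁ F₂) : XrayEq S F₂ F₁ :=
  fun T => (h T).symm

theorem sdiff (hF₁ : F₁.Finite) (hF₂ : F₂.Finite) (h : XrayEq S F₁ F₂) :
    XrayEq S (F₁ \ F₂) (F₂ \ F₁) := by
  intro T
  have h₁ := ncard_inter_add_ncard_sdiff_eq_ncard (F₁ ∩ fiber S T) F₂ (hF₁.inter_of_left _)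
  have h₂ := ncard_inter_add_ncard_sdiff_eq_ncard (F₂ ∩ fiber S T) F₁ (hF₂.inter_of_left _)
  have hcommon : F₁ ∩ fiber S T ∩ F₂ = F₂ ∩ fiber S T ∩ F₁ := by
    rw [inter_right_comm, inter_comm F₁ F₂, inter_right_comm]
  rw [hcommon, inter_sdiff_right_comm] at h₁
  rw [inter_sdiff_right_comm] at h₂
  have := h T
  omega

theorem inter_fiber_nonempty (h : XrayEq S F₁ F₂) (hF₁ : F₁.Finite) {x : Fin d → ℝ}
    (hx : x ∈ F₁) : (F₂ ∩ fiber S (Submodule.Quotient.mk x)).Nonempty := by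
  refine nonempty_of_ncard_ne_zero ?_
  rw [← h]
  exact ((ncard_pos (hF₁.inter_of_left (fiber S _))).2 ⟨x, hx, rfl⟩).ne'

end XrayEq

theorem ncard_le_of_forall_inter_fiber_nonempty {𝒮 : Set (Submodule ℝ (Fin d → ℝ))}
    (hdim : ∀ S ∈ 𝒮, finrank ℝ S = 1) {A : Set (Fin d → ℝ)} (hA : A.Finite)
    {b : Fin d → ℝ} (hb : b ∉ A)
    (hmeet : ∀ S ∈ 𝒮, (A ∩ fiber S (Submodule.Quotient.mk b)).Nonempty) :
    𝒮.ncard ≤ A.ncard := by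
  have hsub : 𝒮 ⊆ (fun a => ℝ ∙ (a - b)) '' A := by
    intro S hS
    obtain ⟨a, ha, hab⟩ := hmeet S hS
    exact ⟨a, ha, (eq_span_singleton_of_mem_of_finrank_eq_one (hdim S hS)
      (mem_fiber_mk_iff.1 hab) (sub_ne_zero.2 (ne_of_mem_of_not_mem ha hb))).symm⟩
  calc 𝒮.ncard ≤ ((fun a => ℝ ∙ (a - b)) '' A).ncard := ncard_le_ncard hsub (hA.image _)
    _ ≤ A.ncard := ncard_image_le hA

theorem renyi_heppes_general
    (d m : ℕ) (𝒮 : Set (Submodule ℝ (Fin d → ℝ)))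
    (hdim : ∀ S ∈ 𝒮, Module.finrank ℝ S = 1) (hcard : 𝒮.ncard = m)
    (F : Set (Fin d → ℝ)) (hF : F.Finite) (hFcard : F.ncard + 1 ≤ m)
    (F' : Set (Fin d → ℝ)) (hF' : F'.Finite) (h : TomEq 𝒮 F' F) :
    F' = F := by
  have hdiff : TomEq 𝒮 (F' \ F) (F \ F') := fun S hS => (h S hS).sdiff hF' hF
  have hnew : F' \ F = ∅ := by
    refine eq_empty_of_forall_notMem fun b hb => ?_
    have hle := ncard_le_of_forall_inter_fiber_nonempty hdim hF.sdiff (fun hb' => hb'.2 hb.1)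
      fun S hS => (hdiff S hS).inter_fiber_nonempty hF'.sdiff hb
    have hAF : (F \ F').ncard ≤ F.ncard := ncard_le_ncard sdiff_subset hF
    omega
  have hlost : F \ F' = ∅ := by
    obtain ⟨S, hS⟩ : 𝒮.Nonempty := nonempty_of_ncard_ne_zero (by omega)
    refine eq_empty_of_forall_notMem fun a ha => ?_
    obtain ⟨b, hb, -⟩ := (hdiff S hS).symm.inter_fiber_nonempty hF.sdiff ha
    rw [hnew] at hb
    exact hb
  exact (sdiff_eq_empty.1 hnew).antisymm (sdiff_eq_empty.1 hlost)

theorem renyi_heppes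
    (d m : ℕ) (𝒮 : Set (Submodule ℝ (Fin d → ℝ))) (hfin : 𝒮.Finite)
    (hdim : ∀ S ∈ 𝒮, Module.finrank ℝ S = 1) (hcard : 𝒮.ncard = m)
    (F : Set (Fin d → ℝ)) (hF : F.Finite) (hFcard : F.ncard + 1 ≤ m)
    (F' : Set (Fin d → ℝ)) (hF' : F'.Finite) (h : TomEq 𝒮 F' F) :
    F' = F :=
  renyi_heppes_general d m 𝒮 hdim hcard F hF hFcard F' hF' h
end

section
/- (Sharpness of Rényi's theorem) Let m ≥ 2 and for j = 0, …, 2m − 1 let v_j = (cos(jπ/m), sin(jπ/m)) ∈ ℝ² be the vertices of a regular 2m-gon. Set F₁ = {v_j : j even} and F₂ = {v_j : j odd}. Then F₁ and F₂ are disjoint sets of cardinality m each, and they are tomographically equivalent with respect to the m pairwise distinct 1-dimensional subspaces span{v_{j+1} − v_j}, j = 0, …, m − 1 (the edge directions of the 2m-gon). -/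
open Set

variable {d : ℕ}

/-! The reflection in the perpendicular bisector of the edge `v_j v_{j+1}` sends `v_k` to
`v_{2j+1-k}`, so it exchanges the even and the odd vertices; and it moves every point parallel
to that edge, so it maps each line parallel to the edge onto itself. Hence it is a bijection
between `F₁ ∩ T` and `F₂ ∩ T` for every such line `T`. -/

lemma xrayEq_of_injOn_of_sub_mem {S : Submodule ℝ (Fin d → ℝ)} {F₁ F₂ : Set (Fin d → ℝ)}
    {f : (Fin d → ℝ) → Fin d → ℝ} (hf : InjOn f F₁) (hfS : ∀ x ∈ F₁, f x - x ∈ S)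
    (hF : f '' F₁ = F₂) : XrayEq S F₁ F₂ := by
  intro T
  have himage : f '' (F₁ ∩ fiber S T) = F₂ ∩ fiber S T := by
    subst hF
    ext y
    constructor
    · rintro ⟨x, ⟨hx, hxT⟩, rfl⟩
      refine ⟨mem_image_of_mem f hx, ?_⟩
      rwa [fiber, mem_ofPred_eq, (Submodule.Quotient.eq S).mpr (hfS x hx)]
    · rintro ⟨⟨x, hx, rfl⟩, hxT⟩
      refine ⟨x, ⟨hx, ?_⟩, rfl⟩
      rwa [fiber, mem_ofPred_eq, ← (Submodule.Quotient.eq S).mpr (hfS x hx)]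
  rw [← himage, (hf.mono inter_subset_left).ncard_image]

namespace RegularPolygon

open Real Function

noncomputable def unitVec (α : ℝ) : Fin 2 → ℝ := ![cos α, sin α]

lemma unitVec_eq_unitVec_iff {α β : ℝ} : unitVec α = unitVec β ↔ (α : Angle) = β := by
  refine ⟨fun h => Angle.cos_sin_inj (congrFun h 0) (congrFun h 1), fun h => ?_⟩
  have hcos := congrArg Angle.cos h
  have hsin := congrArg Angle.sin h
  simp only [Angle.cos_coe, Angle.sin_coe] at hcos hsin
  simp [unitVec, hcos, hsin]

lemma unitVec_sub_unitVec (α β : ℝ) :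
    unitVec β - unitVec α = (2 * sin ((β - α) / 2)) • unitVec ((α + β) / 2 + π / 2) := by
  refine funext (Fin.forall_fin_two.mpr ⟨?_, ?_⟩) <;>
    simp only [unitVec, Pi.sub_apply, Pi.smul_apply, Matrix.cons_val_zero, Matrix.cons_val_one,
      smul_eq_mul, cos_sub_cos, sin_sub_sin, cos_add_pi_div_two, sin_add_pi_div_two] <;>
    ring_nf

lemma sin_sub_eq_zero_of_mem_span {α β : ℝ} (h : unitVec α ∈ Submodule.span ℝ {unitVec β}) :
    sin (α - β) = 0 := by
  obtain ⟨c, hc⟩ := Submodule.mem_span_singleton.mp h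
  have hcos : c * cos β = cos α := by simpa [unitVec] using congrFun hc 0
  have hsin : c * sin β = sin α := by simpa [unitVec] using congrFun hc 1
  rw [sin_sub, ← hcos, ← hsin]
  ring

/-- The reflection in the line through the origin at angle `θ`. -/
noncomputable def reflect (θ : ℝ) (x : Fin 2 → ℝ) : Fin 2 → ℝ :=
  ![cos (2 * θ) * x 0 + sin (2 * θ) * x 1, sin (2 * θ) * x 0 - cos (2 * θ) * x 1]

lemma reflect_unitVec (θ α : ℝ) : reflect θ (unitVec α) = unitVec (2 * θ - α) := by
  refine funext (Fin.forall_fin_two.mpr ⟨?_, ?_⟩)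
  · simp [reflect, unitVec, cos_sub]
  · simp [reflect, unitVec, sin_sub]

lemma reflect_involutive (θ : ℝ) : Involutive (reflect θ) := by
  intro x
  refine funext (Fin.forall_fin_two.mpr ⟨?_, ?_⟩) <;>
    simp only [reflect, Matrix.cons_val_zero, Matrix.cons_val_one]
  · linear_combination x 0 * sin_sq_add_cos_sq (2 * θ)
  · linear_combination x 1 * sin_sq_add_cos_sq (2 * θ)

lemma reflect_sub_self (θ : ℝ) (x : Fin 2 → ℝ) :
    reflect θ x - x = (2 * (sin θ * x 0 - cos θ * x 1)) • unitVec (θ + π / 2) := by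
  refine funext (Fin.forall_fin_two.mpr ⟨?_, ?_⟩) <;>
    simp only [reflect, unitVec, Pi.sub_apply, Pi.smul_apply, Matrix.cons_val_zero,
      Matrix.cons_val_one, smul_eq_mul, cos_two_mul, sin_two_mul, cos_add_pi_div_two,
      sin_add_pi_div_two]
  · linear_combination 2 * x 0 * sin_sq_add_cos_sq θ
  · ring

/-- The vertex `v_a` of the regular `2m`-gon, indexed by `a : ℤ` so that reflections act on
indices as `a ↦ b - a`. -/
noncomputable def vertex (m : ℕ) (a : ℤ) : Fin 2 → ℝ := unitVec (a * π / m)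

variable {m : ℕ}

lemma vertex_eq_vertex_iff (hm : m ≠ 0) {a b : ℤ} :
    vertex m a = vertex m b ↔ 2 * (m : ℤ) ∣ a - b := by
  have hm' : (m : ℝ) ≠ 0 := Nat.cast_ne_zero.mpr hm
  rw [vertex, vertex, unitVec_eq_unitVec_iff, Angle.angle_eq_iff_two_pi_dvd_sub]
  refine exists_congr fun k => ?_
  rw [← sub_div, ← sub_mul, div_eq_iff hm', show 2 * π * k * m = 2 * m * k * π by ring,
    mul_left_inj' pi_ne_zero]
  norm_cast

lemma vertex_emod (hm : m ≠ 0) (a : ℤ) : vertex m (a % (2 * m)) = vertex m a :=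
  (vertex_eq_vertex_iff hm).mpr Int.dvd_emod_sub_self

lemma injOn_vertex_natCast (hm : m ≠ 0) : InjOn (fun j : ℕ => vertex m j) (Iio (2 * m)) := by
  intro i hi j hj hij
  refine Nat.ModEq.eq_of_lt_of_lt (Nat.modEq_iff_dvd.mpr ?_) hi hj
  exact_mod_cast (vertex_eq_vertex_iff hm).mp hij.symm

lemma setOf_vertex_natCast_eq_image (hm : m ≠ 0) {P : ℤ → Prop}
    (hP : ∀ a, P (a % (2 * m)) ↔ P a) :
    {x | ∃ j : ℕ, j < 2 * m ∧ P j ∧ x = vertex m j} = vertex m '' {a | P a} := by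
  ext x
  constructor
  · rintro ⟨j, -, hj, rfl⟩
    exact ⟨j, hj, rfl⟩
  · rintro ⟨a, ha, rfl⟩
    have h2m : (0 : ℤ) < 2 * m := by positivity
    obtain ⟨j, hj⟩ : ∃ j : ℕ, (j : ℤ) = a % (2 * m) :=
      ⟨_, Int.toNat_of_nonneg (Int.emod_nonneg a h2m.ne')⟩
    have hj_lt : (j : ℤ) < 2 * m := hj ▸ Int.emod_lt_of_pos a h2m
    refine ⟨j, by omega, ?_, ?_⟩ <;> rw [hj]
    · exact (hP a).mpr ha
    · exact (vertex_emod hm a).symm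

lemma ncard_setOf_vertex_natCast (hm : m ≠ 0) (P : ℕ → Prop) :
    {x | ∃ j : ℕ, j < 2 * m ∧ P j ∧ x = vertex m j}.ncard = {j | j < 2 * m ∧ P j}.ncard := by
  have hset : {x | ∃ j : ℕ, j < 2 * m ∧ P j ∧ x = vertex m j} =
      (fun j : ℕ => vertex m j) '' {j | j < 2 * m ∧ P j} := by
    ext x
    simp only [mem_ofPred_eq, mem_image, and_assoc, eq_comm]
  rw [hset, ((injOn_vertex_natCast hm).mono fun j hj => hj.1).ncard_image]

lemma ncard_setOf_lt_two_mul_mod_two {r : ℕ} (hr : r < 2) :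
    {j : ℕ | j < 2 * m ∧ j % 2 = r}.ncard = m := by
  have hset : {j : ℕ | j < 2 * m ∧ j % 2 = r} = (fun i => 2 * i + r) '' Iio m := by
    ext j
    simp only [mem_ofPred_eq, mem_image, mem_Iio]
    constructor
    · rintro ⟨hj, rfl⟩
      exact ⟨j / 2, by omega, by omega⟩
    · rintro ⟨i, hi, rfl⟩
      omega
  rw [hset, ncard_image_of_injective _ fun i i' h => by simpa using h, ncard_Iio_nat]

lemma reflect_vertex (b a : ℤ) : reflect (b * π / (2 * m)) (vertex m a) = vertex m (b - a) := by
  rw [vertex, reflect_unitVec, vertex]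
  congr 1
  push_cast
  ring

lemma span_vertex_edge (hm : m ≠ 0) (a : ℤ) :
    Submodule.span ℝ {vertex m (a + 1) - vertex m a} =
      Submodule.span ℝ {unitVec ((2 * a + 1) * π / (2 * m) + π / 2)} := by
  have hm' : (1 : ℝ) ≤ m := Nat.one_le_cast.mpr (Nat.one_le_iff_ne_zero.mpr hm)
  have hsin : sin (π / (2 * m)) ≠ 0 := by
    refine (sin_pos_of_pos_of_lt_pi (by positivity) ?_).ne'
    exact div_lt_self pi_pos (by linarith)
  rw [vertex, vertex, unitVec_sub_unitVec]
  convert Submodule.span_singleton_smul_eq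
    (isUnit_iff_ne_zero.mpr (mul_ne_zero two_ne_zero hsin)) _ using 4
  · push_cast
    congr 2
    ring
  · push_cast
    ring

lemma eq_of_span_vertex_edge_eq (hm : m ≠ 0) {i j : ℕ} (hi : i < m) (hj : j < m)
    (h : Submodule.span ℝ {vertex m (i + 1) - vertex m i} =
      Submodule.span ℝ {vertex m (j + 1) - vertex m j}) : i = j := by
  have hm' : (m : ℝ) ≠ 0 := Nat.cast_ne_zero.mpr hm
  rw [span_vertex_edge hm, span_vertex_edge hm] at h
  obtain ⟨n, hn⟩ := sin_eq_zero_iff.mp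
    (sin_sub_eq_zero_of_mem_span (h ▸ Submodule.mem_span_singleton_self _))
  refine Nat.ModEq.eq_of_lt_of_lt (Nat.modEq_iff_dvd.mpr ⟨-n, ?_⟩) hi hj
  have hreal : ((j : ℤ) - i : ℝ) = m * -n := by
    field_simp at hn
    linear_combination hn / 2
  exact_mod_cast hreal

lemma xrayEq_span_vertex_edge (hm : m ≠ 0) (j : ℤ) :
    XrayEq (Submodule.span ℝ {vertex m (j + 1) - vertex m j})
      (vertex m '' {a | Even a}) (vertex m '' {a | Odd a}) := by
  refine xrayEq_of_injOn_of_sub_mem (f := reflect ((2 * j + 1 : ℤ) * π / (2 * m)))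
    (reflect_involutive _).injective.injOn (fun x _ => ?_) ?_
  · rw [span_vertex_edge hm, reflect_sub_self]
    push_cast
    exact Submodule.smul_mem _ _ (Submodule.mem_span_singleton_self _)
  · have hparity : (fun a : ℤ => 2 * j + 1 - a) '' {a | Even a} = {a | Odd a} := by
      ext b
      refine ⟨?_, fun hb => ⟨2 * j + 1 - b, ?_, by ring⟩⟩
      · rintro ⟨a, ha : Even a, rfl⟩
        exact (odd_two_mul_add_one j).sub_even ha
      · exact (odd_two_mul_add_one j).sub_odd hb
    rw [image_image]
    simp_rw [reflect_vertex]
    rw [← image_image (vertex m), hparity]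

lemma disjoint_image_even_image_odd (hm : m ≠ 0) :
    Disjoint (vertex m '' {a | Even a}) (vertex m '' {a | Odd a}) := by
  rw [disjoint_left]
  rintro _ ⟨a, ha : Even a, rfl⟩ ⟨b, hb : Odd b, hab⟩
  have hdiff : Even (b - a) :=
    even_iff_two_dvd.mpr ((dvd_mul_right 2 (m : ℤ)).trans ((vertex_eq_vertex_iff hm).mp hab))
  exact Int.not_even_iff_odd.mpr hb (by simpa [Int.even_sub, ha] using hdiff)

end RegularPolygon

open RegularPolygon

theorem renyi_sharpness_regular_2m_gon
    (m : ℕ) (hm : 2 ≤ m)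
    (v : ℕ → (Fin 2 → ℝ))
    (hv : ∀ j : ℕ, v j = ![Real.cos ((j : ℝ) * Real.pi / (m : ℝ)),
                           Real.sin ((j : ℝ) * Real.pi / (m : ℝ))])
    (F₁ F₂ : Set (Fin 2 → ℝ))
    (hF₁ : F₁ = {x | ∃ j : ℕ, j < 2 * m ∧ Even j ∧ x = v j})
    (hF₂ : F₂ = {x | ∃ j : ℕ, j < 2 * m ∧ Odd j ∧ x = v j}) :
    Disjoint F₁ F₂ ∧ F₁.ncard = m ∧ F₂.ncard = m ∧
    (∀ i j : ℕ, i < m → j < m → i ≠ j →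
      Submodule.span ℝ {v (i + 1) - v i} ≠ Submodule.span ℝ {v (j + 1) - v j}) ∧
    TomEq {L | ∃ j : ℕ, j < m ∧ L = Submodule.span ℝ {v (j + 1) - v j}} F₁ F₂ := by
  have hm0 : m ≠ 0 := by omega
  obtain rfl : v = fun j : ℕ => vertex m j := funext fun j => by simp [hv, vertex, unitVec]
  have hF₁' : F₁ = vertex m '' {a | Even a} := by
    rw [hF₁, ← setOf_vertex_natCast_eq_image hm0 fun a => by
      simp only [Int.even_iff, Int.emod_emod_of_dvd a (dvd_mul_right 2 (m : ℤ))]]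
    simp
  have hF₂' : F₂ = vertex m '' {a | Odd a} := by
    rw [hF₂, ← setOf_vertex_natCast_eq_image hm0 fun a => by
      simp only [Int.odd_iff, Int.emod_emod_of_dvd a (dvd_mul_right 2 (m : ℤ))]]
    simp
  refine ⟨hF₁' ▸ hF₂' ▸ disjoint_image_even_image_odd hm0, ?_, ?_,
    fun i j hi hj hij h => hij (eq_of_span_vertex_edge_eq hm0 hi hj (by exact_mod_cast h)), ?_⟩
  · rw [hF₁, ncard_setOf_vertex_natCast hm0]
    simpa only [Nat.even_iff] using ncard_setOf_lt_two_mul_mod_two (m := m) two_pos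
  · rw [hF₂, ncard_setOf_vertex_natCast hm0]
    simpa only [Nat.odd_iff] using ncard_setOf_lt_two_mul_mod_two (m := m) one_lt_two
  · rintro S ⟨j, -, rfl⟩
    rw [hF₁', hF₂']
    exact_mod_cast xrayEq_span_vertex_edge hm0 j
end

section
/- (Hajdu–Tijdeman) Let ψ, φ : ℕ₀^d → ℕ₀ be functions with finite support, let v = (ν₁, …, ν_d) ∈ ℤ^d be nonzero with gcd(ν₁, …, ν_d) = 1, and let S = ℝ·v. Then the X-rays of ψ and φ parallel to S coincide (i.e., for every affine line T parallel to S, Σ_{x ∈ T ∩ ℕ₀^d} ψ(x) = Σ_{x ∈ T ∩ ℕ₀^d} φ(x)) if and only if the polynomial Σ_a ψ(a)·X^a − Σ_b φ(b)·X^b ∈ ℤ[X₁, …, X_d] is divisible by X^{v⁺} − X^{v⁻}, where v⁺ and v⁻ are the componentwise positive and negative parts of v (so v = v⁺ − v⁻), and X^a denotes the monomial X₁^{α₁}⋯X_d^{α_d} for a = (α₁, …, α_d) ∈ ℕ₀^d. -/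
open Set

variable {d : ℕ}

/-- The canonical embedding of `ℕ₀^d` into `ℝ^d`. -/
def embedN (x : Fin d → ℕ) : Fin d → ℝ := fun i => (x i : ℝ)

/-- The X-ray of a finitely supported function `ψ : ℕ₀^d → ℕ₀` parallel to `S`,
evaluated at the affine line corresponding to `T`. -/
noncomputable def xrayFun (S : Submodule ℝ (Fin d → ℝ)) (ψ : (Fin d → ℕ) → ℕ)
    (T : (Fin d → ℝ) ⧸ S) : ℕ :=
  ∑ᶠ x ∈ {x : Fin d → ℕ | (Submodule.Quotient.mk (embedN x) : (Fin d → ℝ) ⧸ S) = T}, ψ x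

/-- The generating polynomial `Σ_a ψ(a)·X^a ∈ ℤ[X₁,…,X_d]`. -/
noncomputable def polyOf (ψ : (Fin d → ℕ) → ℕ) : MvPolynomial (Fin d) ℤ :=
  ∑ᶠ a : Fin d → ℕ, MvPolynomial.monomial (Finsupp.equivFunOnFinite.symm a) ((ψ a : ℤ))

/-!
Map `ℤ[X₁, …, X_d]` to the group ring of `ℤ^d ⧸ ℤv` by sending the exponent `m` to its class:
the coefficient of the image at a class is the sum of the coefficients along that lattice line.
Since `gcd v = 1`, two lattice points on a common real line parallel to `v` differ by an integer
multiple of `v`, so the X-rays of `ψ` and `φ` agree exactly when `polyOf ψ - polyOf φ` lies in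
the kernel of this map. The kernel is generated by `X^{v⁺} - X^{v⁻}`: modulo this binomial every
monomial reduces to one not divisible by `X^{v⁺}` (if `v⁺ = 0`, replace `v` by `-v`), and distinct
reduced monomials lie on distinct lines, so a reduced polynomial in the kernel vanishes.
-/

open MvPolynomial

def latticeClass (N : Submodule ℤ (Fin d → ℤ)) : (Fin d →₀ ℕ) →+ (Fin d → ℤ) ⧸ N where
  toFun m := Submodule.Quotient.mk fun i => (m i : ℤ)
  map_zero' := by
    rw [← Submodule.Quotient.mk_zero N]
    congr
  map_add' m m' := by
    rw [← Submodule.Quotient.mk_add]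
    congr

theorem latticeClass_eq_iff {N : Submodule ℤ (Fin d → ℤ)} {m m' : Fin d →₀ ℕ} :
    latticeClass N m = latticeClass N m' ↔ ((fun i => (m i : ℤ)) - fun i => (m' i : ℤ)) ∈ N :=
  Submodule.Quotient.eq N

noncomputable def lineSum (N : Submodule ℤ (Fin d → ℤ)) :
    MvPolynomial (Fin d) ℤ →+* AddMonoidAlgebra ℤ ((Fin d → ℤ) ⧸ N) :=
  AddMonoidAlgebra.mapDomainRingHom ℤ (latticeClass N)

theorem lineSum_monomial (N : Submodule ℤ (Fin d → ℤ)) (m : Fin d →₀ ℕ) (c : ℤ) :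
    lineSum N (monomial m c) = AddMonoidAlgebra.single (latticeClass N m) c :=
  AddMonoidAlgebra.mapDomain_single

noncomputable def natPosPart (v : Fin d → ℤ) : Fin d →₀ ℕ :=
  Finsupp.equivFunOnFinite.symm fun i => (v i).toNat

@[simp] theorem natPosPart_apply (v : Fin d → ℤ) (i : Fin d) : natPosPart v i = (v i).toNat := rfl

theorem natPosPart_sub_natPosPart_neg (v : Fin d → ℤ) :
    ((fun i => (natPosPart v i : ℤ)) - fun i => (natPosPart (-v) i : ℤ)) = v := by
  ext i
  simp

noncomputable def lineBinomial (v : Fin d → ℤ) : MvPolynomial (Fin d) ℤ :=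
  monomial (natPosPart v) 1 - monomial (natPosPart (-v)) 1

theorem lineBinomial_neg (v : Fin d → ℤ) : lineBinomial (-v) = -lineBinomial v := by
  rw [lineBinomial, lineBinomial, neg_neg, neg_sub]

theorem lineSum_lineBinomial (v : Fin d → ℤ) : lineSum (ℤ ∙ v) (lineBinomial v) = 0 := by
  rw [lineBinomial, map_sub, lineSum_monomial, lineSum_monomial, sub_eq_zero]
  congr 1
  rw [latticeClass_eq_iff, natPosPart_sub_natPosPart_neg]
  exact Submodule.mem_span_singleton_self v

theorem natPosPart_le_of_sub_eq_smul {v : Fin d → ℤ} {m m' : Fin d →₀ ℕ} {t : ℤ} (ht : 0 < t)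
    (h : ((fun i => (m i : ℤ)) - fun i => (m' i : ℤ)) = t • v) : natPosPart v ≤ m := by
  intro i
  have hi := congrFun h i
  simp only [Pi.sub_apply, Pi.smul_apply, smul_eq_mul] at hi
  rw [natPosPart_apply]
  rcases le_or_gt (v i) 0 with hv | hv
  · simp [Int.toNat_of_nonpos hv]
  · have : v i ≤ t * v i := le_mul_of_one_le_left hv.le ht
    omega

def reducedExponents (v : Fin d → ℤ) : Set (Fin d →₀ ℕ) :=
  {m | ¬ natPosPart v ≤ m}

theorem injOn_latticeClass (v : Fin d → ℤ) :
    Set.InjOn (latticeClass (ℤ ∙ v)) (reducedExponents v) := by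
  intro m hm m' hm' h
  obtain ⟨t, ht⟩ := Submodule.mem_span_singleton.1 (latticeClass_eq_iff.1 h)
  rcases lt_trichotomy t 0 with htneg | rfl | htpos
  · refine absurd (natPosPart_le_of_sub_eq_smul (neg_pos.2 htneg) (m := m') (m' := m) ?_) hm'
    rw [neg_smul, ht, neg_sub]
  · ext i
    simpa [sub_eq_zero] using congrFun ht.symm i
  · exact absurd (natPosPart_le_of_sub_eq_smul htpos ht.symm) hm

theorem exists_reduced_monomial {v : Fin d → ℤ} {i₀ : Fin d} (hv : 0 < v i₀) (m : Fin d →₀ ℕ) :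
    ∃ m' ∈ reducedExponents v, lineBinomial v ∣ monomial m 1 - monomial m' 1 := by
  induction hk : m i₀ using Nat.strong_induction_on generalizing m with
  | _ k ih =>
    by_cases hm : natPosPart v ≤ m
    · -- replace `X^{v⁺}` by `X^{v⁻}`, which lowers the exponent of `X_{i₀}`
      set m₁ := m - natPosPart v + natPosPart (-v)
      have hlt : m₁ i₀ < k := by
        have := hm i₀
        simp only [m₁, Finsupp.add_apply, Finsupp.tsub_apply, natPosPart_apply,
          Pi.neg_apply] at this ⊢
        omega
      obtain ⟨m', hm', hdvd⟩ := ih _ hlt m₁ rfl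
      have hstep : monomial m 1 - monomial m₁ 1 =
          monomial (m - natPosPart v) 1 * lineBinomial v := by
        rw [lineBinomial, mul_sub, monomial_mul, monomial_mul, tsub_add_cancel_of_le hm, one_mul]
      refine ⟨m', hm', ?_⟩
      rw [← sub_add_sub_cancel _ (monomial m₁ 1), hstep]
      exact dvd_add (dvd_mul_left _ _) hdvd
    · exact ⟨m, hm, by simp⟩

theorem exists_reduced {v : Fin d → ℤ} {i₀ : Fin d} (hv : 0 < v i₀) (f : MvPolynomial (Fin d) ℤ) :
    ∃ g : MvPolynomial (Fin d) ℤ,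
      ↑g.support ⊆ reducedExponents v ∧ lineBinomial v ∣ f - g := by
  classical
  induction f using MvPolynomial.induction_on' with
  | monomial m c =>
    obtain ⟨m', hm', hdvd⟩ := exists_reduced_monomial hv m
    refine ⟨monomial m' c, fun n hn => ?_, ?_⟩
    · rwa [Finset.mem_singleton.1 (support_monomial_subset hn)]
    · have : monomial m c - monomial m' c = C c * (monomial m 1 - monomial m' 1) := by
        rw [mul_sub, C_mul_monomial, C_mul_monomial, mul_one]
      rw [this]
      exact hdvd.mul_left _
  | add p q hp hq =>
    obtain ⟨gp, hgp, hdp⟩ := hp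
    obtain ⟨gq, hgq, hdq⟩ := hq
    refine ⟨gp + gq, fun n hn => ?_, ?_⟩
    · rcases Finset.mem_union.1 (support_add hn) with hn | hn
      exacts [hgp hn, hgq hn]
    · rw [add_sub_add_comm]
      exact dvd_add hdp hdq

theorem eq_zero_of_lineSum_eq_zero {v : Fin d → ℤ} {g : MvPolynomial (Fin d) ℤ}
    (hg : ↑g.support ⊆ reducedExponents v) (h : lineSum (ℤ ∙ v) g = 0) : g = 0 := by
  apply AddMonoidAlgebra.coeff_injective
  refine Finsupp.mapDomain_injOn _ (injOn_latticeClass v) hg (by simp) ?_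
  exact congrArg AddMonoidAlgebra.coeff h

theorem lineBinomial_dvd_iff_of_pos {v : Fin d → ℤ} {i₀ : Fin d} (hv : 0 < v i₀)
    (f : MvPolynomial (Fin d) ℤ) : lineBinomial v ∣ f ↔ lineSum (ℤ ∙ v) f = 0 := by
  refine ⟨fun ⟨h, hf⟩ => by rw [hf, map_mul, lineSum_lineBinomial, zero_mul], fun hf => ?_⟩
  obtain ⟨g, hg, h, hfg⟩ := exists_reduced hv f
  have hg0 : g = 0 := by
    refine eq_zero_of_lineSum_eq_zero hg ?_
    rw [← sub_sub_cancel f g, hfg, map_sub, map_mul, hf, lineSum_lineBinomial, zero_mul, sub_zero]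
  rw [← sub_zero f, ← hg0, hfg]
  exact dvd_mul_right _ _

theorem lineBinomial_dvd_iff {v : Fin d → ℤ} (hv : v ≠ 0) (f : MvPolynomial (Fin d) ℤ) :
    lineBinomial v ∣ f ↔ lineSum (ℤ ∙ v) f = 0 := by
  obtain ⟨i, hi⟩ := Function.ne_iff.1 hv
  rcases hi.lt_or_gt with hneg | hpos
  · have hspan : ℤ ∙ (-v) = ℤ ∙ v := by rw [← Set.neg_singleton, Submodule.span_neg]
    rw [← neg_dvd, ← lineBinomial_neg, lineBinomial_dvd_iff_of_pos (i₀ := i) (neg_pos.2 hneg), hspan]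
  · exact lineBinomial_dvd_iff_of_pos hpos f

theorem Finset.forall_sum_fiber_eq_zero_iff {α β M : Type*} [AddCommMonoid M] [DecidableEq β]
    (s : Finset α) (π : α → β) (w : α → M) :
    (∀ q, ∑ a ∈ s with π a = q, w a = 0) ↔ ∀ b ∈ s, ∑ a ∈ s with π a = π b, w a = 0 := by
  refine ⟨fun h b _ => h (π b), fun h q => ?_⟩
  by_cases hq : ∃ b ∈ s, π b = q
  · obtain ⟨b, hb, rfl⟩ := hq
    exact h b hb
  · simp only [not_exists, not_and] at hq
    rw [Finset.filter_false_of_mem hq, Finset.sum_empty]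

theorem AddMonoidAlgebra.sum_single_eq_zero_iff {α β R : Type*} [Semiring R] [DecidableEq β]
    (s : Finset α) (π : α → β) (w : α → R) :
    ∑ a ∈ s, single (π a) (w a) = 0 ↔ ∀ b ∈ s, ∑ a ∈ s with π a = π b, w a = 0 := by
  rw [← Finset.forall_sum_fiber_eq_zero_iff, ← coeff_inj, Finsupp.ext_iff]
  refine forall_congr' fun q => ?_
  rw [coeff_sum, Finsupp.finsetSum_apply, Finset.sum_filter]
  simp [Finsupp.single_apply]

theorem mem_span_real_iff_mem_span_int {v : Fin d → ℤ} (hgcd : Finset.univ.gcd v = 1)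
    (x : Fin d → ℤ) : (fun i => (x i : ℝ)) ∈ ℝ ∙ (fun i => (v i : ℝ)) ↔ x ∈ ℤ ∙ v := by
  simp only [Submodule.mem_span_singleton]
  refine ⟨fun ⟨t, ht⟩ => ?_, fun ⟨n, hn⟩ => ⟨n, by ext i; simp [← hn]⟩⟩
  have hx : ∀ i, (x i : ℝ) = t * v i := fun i => by simpa using (congrFun ht i).symm
  obtain ⟨u, hu⟩ := Finset.gcd_eq_sum_mul Finset.univ v
  rw [hgcd] at hu
  -- pairing with the Bézout vector `u` shows that the real multiplier `t` is an integer
  have ht : t = ((∑ i, x i * u i : ℤ) : ℝ) := by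
    calc t = t * ((1 : ℤ) : ℝ) := by simp
      _ = ((∑ i, x i * u i : ℤ) : ℝ) := by
        rw [hu]
        push_cast
        simp_rw [hx, Finset.mul_sum, mul_assoc]
  refine ⟨∑ i, x i * u i, funext fun i => ?_⟩
  have := hx i
  rw [ht] at this
  exact_mod_cast this.symm

theorem mk_embedN_eq_iff {v : Fin d → ℤ} (hgcd : Finset.univ.gcd v = 1) (a b : Fin d → ℕ) :
    (Submodule.Quotient.mk (embedN a) : (Fin d → ℝ) ⧸ ℝ ∙ (fun i => (v i : ℝ))) =
        Submodule.Quotient.mk (embedN b) ↔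
      latticeClass (ℤ ∙ v) (Finsupp.equivFunOnFinite.symm a) =
        latticeClass (ℤ ∙ v) (Finsupp.equivFunOnFinite.symm b) := by
  rw [Submodule.Quotient.eq, latticeClass_eq_iff, ← mem_span_real_iff_mem_span_int hgcd]
  convert Iff.rfl using 2
  ext i
  simp [embedN]

theorem polyOf_eq_sum {ψ : (Fin d → ℕ) → ℕ} {s : Finset (Fin d → ℕ)}
    (hs : Function.support ψ ⊆ s) :
    polyOf ψ = ∑ a ∈ s, monomial (Finsupp.equivFunOnFinite.symm a) (ψ a : ℤ) := by
  refine finsum_eq_sum_of_support_subset _ fun a ha => hs fun h0 => ha ?_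
  simp [h0]

open scoped Classical in
theorem xrayFun_eq_sum (S : Submodule ℝ (Fin d → ℝ)) {ψ : (Fin d → ℕ) → ℕ}
    {s : Finset (Fin d → ℕ)} (hs : Function.support ψ ⊆ s) (T : (Fin d → ℝ) ⧸ S) :
    xrayFun S ψ T = ∑ a ∈ s with Submodule.Quotient.mk (embedN a) = T, ψ a := by
  refine finsum_mem_eq_sum_of_subset _ (fun a ha => ?_) (fun a ha => (Finset.mem_filter.1 ha).2)
  exact Finset.mem_filter.2 ⟨hs ha.2, ha.1⟩

open scoped Classical in
theorem forall_xrayFun_eq_iff (S : Submodule ℝ (Fin d → ℝ)) {ψ φ : (Fin d → ℕ) → ℕ}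
    {s : Finset (Fin d → ℕ)} (hψ : Function.support ψ ⊆ s) (hφ : Function.support φ ⊆ s) :
    (∀ T, xrayFun S ψ T = xrayFun S φ T) ↔
      ∀ b ∈ s, ∑ a ∈ s with (Submodule.Quotient.mk (embedN a) : (Fin d → ℝ) ⧸ S) =
        Submodule.Quotient.mk (embedN b), ((ψ a : ℤ) - φ a) = 0 := by
  refine Iff.trans (forall_congr' fun T => ?_) (Finset.forall_sum_fiber_eq_zero_iff s
    (fun a => (Submodule.Quotient.mk (embedN a) : (Fin d → ℝ) ⧸ S)) fun a => (ψ a : ℤ) - φ a)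
  rw [xrayFun_eq_sum S hψ, xrayFun_eq_sum S hφ, Finset.sum_sub_distrib, sub_eq_zero]
  exact_mod_cast Iff.rfl

open scoped Classical in
theorem lineSum_polyOf_sub_eq_zero_iff (N : Submodule ℤ (Fin d → ℤ)) {ψ φ : (Fin d → ℕ) → ℕ}
    {s : Finset (Fin d → ℕ)} (hψ : Function.support ψ ⊆ s) (hφ : Function.support φ ⊆ s) :
    lineSum N (polyOf ψ - polyOf φ) = 0 ↔
      ∀ b ∈ s, ∑ a ∈ s with latticeClass N (Finsupp.equivFunOnFinite.symm a) =
        latticeClass N (Finsupp.equivFunOnFinite.symm b), ((ψ a : ℤ) - φ a) = 0 := by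
  rw [polyOf_eq_sum hψ, polyOf_eq_sum hφ, ← Finset.sum_sub_distrib, map_sum]
  simp_rw [← map_sub, lineSum_monomial]
  exact AddMonoidAlgebra.sum_single_eq_zero_iff ..

theorem hajdu_tijdeman
    (d : ℕ) (ψ φ : (Fin d → ℕ) → ℕ)
    (hψ : (Function.support ψ).Finite) (hφ : (Function.support φ).Finite)
    (v : Fin d → ℤ) (hv : v ≠ 0) (hgcd : Finset.univ.gcd v = 1)
    (S : Submodule ℝ (Fin d → ℝ)) (hS : S = Submodule.span ℝ {fun i => (v i : ℝ)}) :
    (∀ T : (Fin d → ℝ) ⧸ S, xrayFun S ψ T = xrayFun S φ T) ↔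
      (MvPolynomial.monomial (Finsupp.equivFunOnFinite.symm fun i => (v i).toNat) (1 : ℤ) -
        MvPolynomial.monomial (Finsupp.equivFunOnFinite.symm fun i => (-(v i)).toNat) (1 : ℤ)) ∣
        (polyOf ψ - polyOf φ) := by
  classical
  subst hS
  set s := hψ.toFinset ∪ hφ.toFinset
  have hψs : Function.support ψ ⊆ s := by simp [s]
  have hφs : Function.support φ ⊆ s := by simp [s]
  change _ ↔ lineBinomial v ∣ _
  rw [lineBinomial_dvd_iff hv, forall_xrayFun_eq_iff _ hψs hφs,
    lineSum_polyOf_sub_eq_zero_iff _ hψs hφs]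
  simp_rw [mk_embedN_eq_iff hgcd]
end

section
/- (Stability jump) Let 𝒮 be a set of m 1-dimensional linear subspaces of ℝ^d and let F₁, F₂ ⊆ ℝ^d be finite with |F₁| = |F₂|. If Δ_𝒮(F₁, F₂) < 2(m − 1), then F₁ and F₂ are tomographically equivalent with respect to 𝒮, i.e., Δ_𝒮(F₁, F₂) = 0. The same statement holds when F₁, F₂ ⊆ ℤ^d and 𝒮 consists of lattice lines. -/
open Set

variable {d : ℕ}

/-!
If the X-rays differ along some `S₀ ∈ 𝒮`, each of the other lines with differing X-rays
contributes at least `2` to `Δ` (the fibre differences along a line sum to `|F₁| - |F₂| = 0`),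
and `S₀` alone contributes at least `2k`, where `k` is the number of lines with equal X-rays;
hence `Δ ≥ 2(m - 1)`.

For the bound at `S₀`, take a functional `μ` that vanishes on `S₀`, separates the lines parallel
to `S₀` through `F₁ ∪ F₂`, and is nonzero on the directions `vᵢ` of the good lines. For a second
functional `ν` the slopes `cᵢ = μ vᵢ / ν vᵢ` are distinct, and for `r < k` Lagrange interpolation
writes `μ(x) ^ r` as a combination of the powers `(μ x - cᵢ ν x) ^ r`, each constant along the
lines parallel to `vᵢ`. So `F₁` and `F₂` have the same `μ`-power sums of order `< k`. If the
contribution of `S₀` were `< 2k`, the positive and negative parts of the X-ray difference along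
`S₀`, read through `μ`, would be two multisets of size `< k` with equal power sums, hence equal by
Newton's identities, which is absurd since their supports are disjoint and not both empty.
-/

open Finset

namespace Multiset

variable {R : Type*} [CommRing R]

theorem mul_esymm_eq_sum (A : Multiset R) (k : ℕ) :
    k * A.esymm k = (-1) ^ (k + 1) * ∑ a ∈ HasAntidiagonal.antidiagonal k with a.1 < k,
      (-1) ^ a.1 * A.esymm a.1 * (A.map (· ^ a.2)).sum := by
  obtain ⟨n, x, rfl⟩ : ∃ (n : ℕ) (x : Fin n → R), univ.val.map x = A :=
    ⟨A.toList.length, A.toList.get, by rw [Fin.univ_val_map, List.ofFn_get, coe_toList]⟩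
  have hpsum (r : ℕ) : MvPolynomial.aeval x (MvPolynomial.psum (Fin n) R r) =
      ((univ.val.map x).map (· ^ r)).sum := by
    simp only [MvPolynomial.psum, map_sum, map_pow, MvPolynomial.aeval_X, map_map]
    rfl
  simpa only [map_mul, map_sum, map_pow, map_neg, map_one, map_natCast, hpsum,
    MvPolynomial.aeval_esymm_eq_multiset_esymm]
    using congrArg (MvPolynomial.aeval x) (MvPolynomial.mul_esymm_eq_sum (Fin n) R k)

variable [IsDomain R] [CharZero R]

theorem esymm_eq_of_sum_map_pow_eq {A B : Multiset R}
    (h : ∀ r, 1 ≤ r → r ≤ card A → (A.map (· ^ r)).sum = (B.map (· ^ r)).sum) :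
    ∀ k ≤ card A, A.esymm k = B.esymm k := by
  intro k
  induction k using Nat.strong_induction_on with
  | _ k ih =>
    intro hk
    rcases Nat.eq_zero_or_pos k with rfl | hk0
    · simp [esymm]
    refine mul_left_cancel₀ (Nat.cast_ne_zero.mpr hk0.ne' : (k : R) ≠ 0) ?_
    rw [mul_esymm_eq_sum, mul_esymm_eq_sum]
    congr 1
    refine sum_congr rfl fun a ha => ?_
    simp only [Finset.mem_filter, HasAntidiagonal.mem_antidiagonal] at ha
    rw [ih a.1 ha.2 (by omega), h a.2 (by omega) (by omega)]

open Polynomial in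
theorem eq_of_card_eq_of_sum_map_pow_eq {A B : Multiset R} (hc : card A = card B)
    (h : ∀ r, 1 ≤ r → r ≤ card A → (A.map (· ^ r)).sum = (B.map (· ^ r)).sum) : A = B := by
  have hprod : (A.map fun a => X - C a).prod = (B.map fun a => X - C a).prod := by
    rw [prod_X_sub_X_eq_sum_esymm, prod_X_sub_X_eq_sum_esymm, ← hc]
    refine sum_congr rfl fun j hj => ?_
    rw [esymm_eq_of_sum_map_pow_eq h j (mem_range_succ_iff.mp hj)]
  simpa only [roots_multiset_prod_X_sub_C] using congrArg roots hprod

end Multiset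

theorem eq_zero_of_sum_mul_pow_eq_zero {ι R : Type*} [CommRing R] [IsDomain R] [CharZero R]
    {s : Finset ι} {t : ι → R} (ht : Set.InjOn t s) {f : ι → ℤ} {k : ℕ}
    (hmom : ∀ r < k, ∑ i ∈ s, (f i : R) * t i ^ r = 0) (hf : ∑ i ∈ s, (f i).natAbs < 2 * k) :
    ∀ i ∈ s, f i = 0 := by
  -- the positive and negative parts of `f` as multisets of nodes; Newton's identities force them
  -- to coincide, while their supports are disjoint
  let M (g : ι → ℕ) : Multiset R := ∑ i ∈ s, g i • {t i}
  have card_M (g : ι → ℕ) : Multiset.card (M g) = ∑ i ∈ s, g i := by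
    simp [M, Multiset.card_sum]
  have sum_M (g : ι → ℕ) (r : ℕ) : ((M g).map (· ^ r)).sum = ∑ i ∈ s, (g i : R) * t i ^ r := by
    rw [← Multiset.coe_mapAddMonoidHom, map_sum, ← Multiset.coe_sumAddMonoidHom, map_sum]
    simp [Multiset.map_nsmul, Multiset.sum_nsmul, nsmul_eq_mul]
  have mem_M (g : ι → ℕ) {i : ι} (hi : i ∈ s) : t i ∈ M g ↔ g i ≠ 0 := by
    simp only [M, Multiset.mem_sum, Multiset.mem_nsmul, Multiset.mem_singleton]
    exact ⟨fun ⟨j, hj, hgj, hij⟩ => ht hi hj hij ▸ hgj, fun hgi => ⟨i, hi, hgi, rfl⟩⟩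
  set A := M fun i => (f i).toNat
  set B := M fun i => (-f i).toNat
  have hmom_AB (r : ℕ) (hr : r < k) : (A.map (· ^ r)).sum = (B.map (· ^ r)).sum := by
    rw [← sub_eq_zero, sum_M, sum_M, ← sum_sub_distrib, ← hmom r hr]
    refine sum_congr rfl fun i _ => ?_
    rw [← sub_mul]
    congr 1
    exact_mod_cast (by omega : ((f i).toNat : ℤ) - ((-f i).toNat : ℤ) = f i)
  have hk : 0 < k := by omega
  have hcard : Multiset.card A = Multiset.card B := by
    simpa using hmom_AB 0 hk
  have hcard_add : Multiset.card A + Multiset.card B = ∑ i ∈ s, (f i).natAbs := by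
    rw [card_M, card_M, ← sum_add_distrib]
    exact sum_congr rfl fun i _ => by omega
  have hAB : A = B := Multiset.eq_of_card_eq_of_sum_map_pow_eq hcard
    fun r _ hr => hmom_AB r (by omega)
  intro i hi
  have hA : t i ∈ A ↔ (f i).toNat ≠ 0 := mem_M _ hi
  have hB : t i ∈ B ↔ (-f i).toNat ≠ 0 := mem_M _ hi
  rw [hAB, hB] at hA
  omega

open Polynomial in
theorem exists_pow_eq_sum_mul_sub_mul_pow {ι K : Type*} [Field K] [Fintype ι] {c : ι → K}
    (hc : Function.Injective c) {r : ℕ} (hr : r < Fintype.card ι) :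
    ∃ w : ι → K, ∀ a b : K, a ^ r = ∑ i, w i * (a - c i * b) ^ r := by
  classical
  -- interpolate `z ↦ (a - z * b) ^ r`, of degree `≤ r`, at the nodes `c i` and evaluate at `0`
  refine ⟨fun i => (Lagrange.basis univ c i).eval 0, fun a b => ?_⟩
  have hnat : ((C a - X * C b) ^ r).natDegree ≤ r := by compute_degree
  have hdeg : ((C a - X * C b) ^ r).degree < (#(univ : Finset ι) : WithBot ℕ) :=
    (degree_le_of_natDegree_le hnat).trans_lt (by rw [card_univ]; exact_mod_cast hr)
  have := congrArg (eval 0) (Lagrange.eq_interpolate hc.injOn hdeg)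
  simp only [Lagrange.interpolate_apply, eval_finsetSum, eval_mul, eval_C, eval_pow, eval_sub,
    eval_X, zero_mul, sub_zero] at this
  rw [this]
  exact sum_congr rfl fun i _ => mul_comm _ _

theorem sum_pow_eq_of_forall_sum_sub_mul_pow_eq {α ι K : Type*} [Field K] [Fintype ι]
    (X₁ X₂ : Finset α) (a b : α → K) {c : ι → K} (hc : Function.Injective c) {r : ℕ}
    (hr : r < Fintype.card ι)
    (h : ∀ i, ∑ x ∈ X₁, (a x - c i * b x) ^ r = ∑ x ∈ X₂, (a x - c i * b x) ^ r) :
    ∑ x ∈ X₁, a x ^ r = ∑ x ∈ X₂, a x ^ r := by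
  obtain ⟨w, hw⟩ := exists_pow_eq_sum_mul_sub_mul_pow hc hr
  have hexp (x : α) : a x ^ r = ∑ i, w i * (a x - c i * b x) ^ r := hw _ _
  rw [sum_congr rfl fun x _ => hexp x, sum_congr rfl fun x _ => hexp x, sum_comm,
    sum_comm (s := X₂)]
  simp only [← mul_sum, h]

section Fibers

variable {α β : Type*} [DecidableEq β]

def fiberDiff (q : α → β) (X₁ X₂ : Finset α) (b : β) : ℤ :=
  #{x ∈ X₁ | q x = b} - #{x ∈ X₂ | q x = b}

-- for `q = S.mkQ` this is the contribution of the direction `S` to `xrayDiff`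
def fiberDist (q : α → β) (X₁ X₂ : Finset α) : ℕ :=
  ∑ b ∈ X₁.image q ∪ X₂.image q, (fiberDiff q X₁ X₂ b).natAbs

theorem fiberDiff_eq_zero_of_notMem {q : α → β} {X₁ X₂ : Finset α} {b : β}
    (hb : b ∉ X₁.image q ∪ X₂.image q) : fiberDiff q X₁ X₂ b = 0 := by
  simp only [Finset.mem_union, Finset.mem_image, not_or, not_exists, not_and] at hb
  simp [fiberDiff, filter_eq_empty_iff.2 hb.1, filter_eq_empty_iff.2 hb.2]

theorem sum_sub_sum_eq_sum_fiberDiff_mul {R : Type*} [CommRing R] (q : α → β) (X₁ X₂ : Finset α)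
    (g : β → R) :
    ∑ x ∈ X₁, g (q x) - ∑ x ∈ X₂, g (q x) =
      ∑ b ∈ X₁.image q ∪ X₂.image q, (fiberDiff q X₁ X₂ b : R) * g b := by
  have hsum (X : Finset α) (hX : X.image q ⊆ X₁.image q ∪ X₂.image q) :
      ∑ x ∈ X, g (q x) = ∑ b ∈ X₁.image q ∪ X₂.image q, (#{x ∈ X | q x = b} : R) * g b := by
    rw [← sum_fiberwise_of_maps_to fun x hx => hX (mem_image_of_mem q hx)]
    refine sum_congr rfl fun b _ => ?_
    rw [sum_congr rfl fun x hx => by rw [(mem_filter.1 hx).2], sum_const, nsmul_eq_mul]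
  rw [hsum X₁ subset_union_left, hsum X₂ subset_union_right, ← sum_sub_distrib]
  simp [fiberDiff, sub_mul]

theorem sum_fiberDiff (q : α → β) (X₁ X₂ : Finset α) :
    ∑ b ∈ X₁.image q ∪ X₂.image q, fiberDiff q X₁ X₂ b = #X₁ - #X₂ := by
  simpa using (sum_sub_sum_eq_sum_fiberDiff_mul (R := ℤ) q X₁ X₂ fun _ => 1).symm

theorem two_le_sum_natAbs_of_sum_eq_zero {ι : Type*} {s : Finset ι} {f : ι → ℤ}
    (hs : ∑ i ∈ s, f i = 0) {i : ι} (hi : i ∈ s) (hfi : f i ≠ 0) : 2 ≤ ∑ i ∈ s, (f i).natAbs := by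
  classical
  rw [← add_sum_erase s _ hi] at hs ⊢
  have := Int.natAbs_sum_le (s.erase i) f
  omega

theorem two_le_fiberDist {q : α → β} {X₁ X₂ : Finset α} (hcard : #X₁ = #X₂) {b : β}
    (hb : fiberDiff q X₁ X₂ b ≠ 0) : 2 ≤ fiberDist q X₁ X₂ :=
  two_le_sum_natAbs_of_sum_eq_zero (by rw [sum_fiberDiff, hcard, sub_self])
    (by_contra fun h => hb (fiberDiff_eq_zero_of_notMem h)) hb

end Fibers

section Lines

variable {K V : Type*} [Field K] [AddCommGroup V] [Module K V]

open Module

theorem sum_pow_eq_of_fiberDiff_eq_zero [Infinite K] {ι : Type*} [Fintype ι]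
    (X₁ X₂ : Finset V) {v : ι → V} (hv : ∀ i j, v j ∈ K ∙ v i → i = j)
    (φ : Dual K V) (hφ : ∀ i, φ (v i) ≠ 0) [∀ i, DecidableEq (V ⧸ K ∙ v i)]
    (hX : ∀ i T, fiberDiff (K ∙ v i).mkQ X₁ X₂ T = 0) {r : ℕ} (hr : r < Fintype.card ι) :
    ∑ x ∈ X₁, φ x ^ r = ∑ x ∈ X₂, φ x ^ r := by
  -- `ψ` does not vanish on the `v i` nor on the `φ (v i) • v j - φ (v j) • v i`, `i ≠ j`,
  -- which makes the slopes `c i` distinct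
  obtain ⟨ψ, hψ⟩ := exists_dual_forall_apply_ne_zero (K := K) (ι := ι ⊕ {p : ι × ι // p.1 ≠ p.2})
    (Sum.elim v fun p => φ (v p.1.1) • v p.1.2 - φ (v p.1.2) • v p.1.1) <| by
      rintro (i | ⟨⟨i, j⟩, hij⟩) h
      · exact hφ i (by rw [show v i = 0 from h, map_zero])
      · refine hij (hv i j ?_)
        have : v j = (φ (v i))⁻¹ • φ (v j) • v i := by
          simp only [Sum.elim_inr, sub_eq_zero] at h
          rw [← h, smul_smul, inv_mul_cancel₀ (hφ i), one_smul]
        rw [this]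
        exact Submodule.smul_mem _ _
          (Submodule.smul_mem _ _ (Submodule.mem_span_singleton_self _))
  let c i := φ (v i) / ψ (v i)
  have hψv i : ψ (v i) ≠ 0 := hψ (.inl i)
  have hc : Function.Injective c := by
    intro i j hij
    by_contra hne
    apply hψ (.inr ⟨(i, j), hne⟩)
    rw [div_eq_div_iff (hψv i) (hψv j)] at hij
    simp only [Sum.elim_inr, map_sub, map_smul, smul_eq_mul]
    linear_combination hij
  refine sum_pow_eq_of_forall_sum_sub_mul_pow_eq X₁ X₂ φ ψ hc hr fun i => ?_
  -- `φ - c i • ψ` kills `v i`, so it is constant along the lines parallel to `v i`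
  let ℓ : Dual K V := φ - c i • ψ
  have hℓ : K ∙ v i ≤ LinearMap.ker ℓ := by
    rw [Submodule.span_singleton_le_iff_mem, LinearMap.mem_ker]
    simp [ℓ, c, div_mul_cancel₀ _ (hψv i)]
  have := sum_sub_sum_eq_sum_fiberDiff_mul (K ∙ v i).mkQ X₁ X₂
    fun T => (K ∙ v i).liftQ ℓ hℓ T ^ r
  simp only [hX, Int.cast_zero, zero_mul, sum_const_zero, sub_eq_zero, Submodule.mkQ_apply,
    Submodule.liftQ_apply] at this
  simpa [ℓ] using this

theorem two_mul_card_le_fiberDist [CharZero K] (X₁ X₂ : Finset V)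
    (𝒢 : Finset (Submodule K V)) (h𝒢 : ∀ S ∈ 𝒢, finrank K S = 1)
    [∀ S : Submodule K V, DecidableEq (V ⧸ S)]
    (hgood : ∀ S ∈ 𝒢, ∀ T, fiberDiff S.mkQ X₁ X₂ T = 0) (S₀ : Submodule K V)
    (hS₀ : ∀ S ∈ 𝒢, ¬ S ≤ S₀) {T₀ : V ⧸ S₀} (hT₀ : fiberDiff S₀.mkQ X₁ X₂ T₀ ≠ 0) :
    2 * #𝒢 ≤ fiberDist S₀.mkQ X₁ X₂ := by
  by_contra! hlt
  have hgen (S : 𝒢) : ∃ v, v ∉ S₀ ∧ S.1 = K ∙ v := by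
    obtain ⟨v, hvS, hv0⟩ := Submodule.exists_mem_ne_zero_of_ne_bot (p := S.1) fun h => by
      have := h𝒢 S S.2
      rw [h, finrank_bot] at this
      exact zero_ne_one this
    have hS := eq_span_singleton_of_mem_of_finrank_eq_one (h𝒢 S S.2) hvS hv0
    exact ⟨v, fun hv => hS₀ S S.2 (hS ▸ (Submodule.span_singleton_le_iff_mem _ _).2 hv), hS⟩
  choose v hvS₀ hvspan using hgen
  have hv (i j : 𝒢) (hij : v j ∈ K ∙ v i) : i = j := by
    have : K ∙ v j = K ∙ v i :=
      Submodule.eq_of_le_of_finrank_eq ((Submodule.span_singleton_le_iff_mem _ _).2 hij)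
        (by rw [← hvspan i, ← hvspan j, h𝒢 _ j.2, h𝒢 _ i.2])
    exact Subtype.ext (by rw [hvspan i, hvspan j, this])
  set U := X₁.image S₀.mkQ ∪ X₂.image S₀.mkQ
  -- `μ` does not vanish on the classes of the `v i` nor on the differences of elements of `U`
  obtain ⟨μ, hμ⟩ := exists_dual_forall_apply_ne_zero (K := K) (ι := 𝒢 ⊕ {p : U × U // p.1 ≠ p.2})
    (Sum.elim (fun i => S₀.mkQ (v i)) fun p => p.1.1.1 - p.1.2.1) <| by
      rintro (i | ⟨⟨T, T'⟩, hTT'⟩)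
      · simpa using hvS₀ i
      · exact sub_ne_zero.2 fun h => hTT' (Subtype.ext h)
  have hμinj : Set.InjOn μ U := fun T hT T' hT' h => by
    by_contra hne
    exact hμ (.inr ⟨(⟨T, hT⟩, ⟨T', hT'⟩), fun h' => hne (congrArg Subtype.val h')⟩)
      (by simp only [Sum.elim_inr, map_sub, h, sub_self])
  have hmom : ∀ r < #𝒢, ∑ T ∈ U, (fiberDiff S₀.mkQ X₁ X₂ T : K) * μ T ^ r = 0 := by
    intro r hr
    rw [← sum_sub_sum_eq_sum_fiberDiff_mul, sub_eq_zero]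
    exact sum_pow_eq_of_fiberDiff_eq_zero X₁ X₂ hv (μ ∘ₗ S₀.mkQ) (fun i => hμ (.inl i))
      (fun i => by rw [← hvspan i]; exact hgood i.1 i.2) (by simpa using hr)
  exact hT₀ (eq_zero_of_sum_mul_pow_eq_zero hμinj hmom hlt T₀
    (by_contra fun h => hT₀ (fiberDiff_eq_zero_of_notMem h)))

end Lines

theorem two_mul_card_sub_one_le_sum {ι : Type*} [DecidableEq ι] {s : Finset ι} (p : ι → Prop)
    [DecidablePred p] {f : ι → ℕ} {i₀ : ι} (hi₀ : i₀ ∈ s) (hpi₀ : ¬ p i₀)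
    (h₀ : 2 * #{i ∈ s | p i} ≤ f i₀) (h : ∀ i ∈ s, ¬ p i → 2 ≤ f i) :
    2 * (#s - 1) ≤ ∑ i ∈ s, f i := by
  have hi₀' : i₀ ∈ {i ∈ s | ¬ p i} := mem_filter.2 ⟨hi₀, hpi₀⟩
  have hsub : ∑ i ∈ {i ∈ s | ¬ p i}, f i ≤ ∑ i ∈ s, f i :=
    sum_le_sum_of_subset (filter_subset _ _)
  have hrest : #({i ∈ s | ¬ p i}.erase i₀) • 2 ≤ ∑ i ∈ {i ∈ s | ¬ p i}.erase i₀, f i :=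
    card_nsmul_le_sum _ _ _ fun i hi => h i (mem_filter.1 (mem_of_mem_erase hi)).1
      (mem_filter.1 (mem_of_mem_erase hi)).2
  rw [← add_sum_erase _ _ hi₀'] at hsub
  rw [card_erase_of_mem hi₀', smul_eq_mul] at hrest
  have hsplit : #{i ∈ s | p i} + #{i ∈ s | ¬ p i} = #s := card_filter_add_card_filter_not p
  have hbad : 0 < #{i ∈ s | ¬ p i} := card_pos.2 ⟨i₀, hi₀'⟩
  omega

section Xray

variable {S : Submodule ℝ (Fin d → ℝ)} {F₁ F₂ : Set (Fin d → ℝ)}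

theorem ncard_inter_fiber {F : Set (Fin d → ℝ)} (hF : F.Finite) (T : (Fin d → ℝ) ⧸ S)
    [DecidableEq ((Fin d → ℝ) ⧸ S)] :
    (F ∩ fiber S T).ncard = #{x ∈ hF.toFinset | S.mkQ x = T} := by
  rw [← Set.ncard_coe_finset]
  congr 1
  ext x
  rw [Finset.mem_coe, Finset.mem_filter, Set.Finite.mem_toFinset]
  rfl

theorem xrayEq_iff_forall_fiberDiff_eq_zero (h₁ : F₁.Finite) (h₂ : F₂.Finite)
    [DecidableEq ((Fin d → ℝ) ⧸ S)] :
    XrayEq S F₁ F₂ ↔ ∀ T, fiberDiff S.mkQ h₁.toFinset h₂.toFinset T = 0 := by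
  simp only [XrayEq, fiberDiff, ncard_inter_fiber h₁, ncard_inter_fiber h₂, sub_eq_zero,
    Nat.cast_inj]

theorem xrayDiff_eq_sum_fiberDist {𝒮 : Set (Submodule ℝ (Fin d → ℝ))} (hfin : 𝒮.Finite)
    (h₁ : F₁.Finite) (h₂ : F₂.Finite)
    [∀ S : Submodule ℝ (Fin d → ℝ), DecidableEq ((Fin d → ℝ) ⧸ S)] :
    xrayDiff 𝒮 F₁ F₂ = ∑ S ∈ hfin.toFinset, fiberDist S.mkQ h₁.toFinset h₂.toFinset := by
  rw [xrayDiff, finsum_mem_eq_finite_toFinset_sum _ hfin]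
  refine sum_congr rfl fun S _ => ?_
  simp only [ncard_inter_fiber h₁, ncard_inter_fiber h₂]
  refine finsum_eq_sum_of_support_subset _ fun T hT => by_contra fun hTU => hT ?_
  simpa [fiberDiff] using fiberDiff_eq_zero_of_notMem hTU

end Xray

theorem stability_jump
    (d m : ℕ) (𝒮 : Set (Submodule ℝ (Fin d → ℝ))) (hfin : 𝒮.Finite)
    (hdim : ∀ S ∈ 𝒮, Module.finrank ℝ S = 1) (hcard : 𝒮.ncard = m)
    (F₁ F₂ : Set (Fin d → ℝ)) (h₁ : F₁.Finite) (h₂ : F₂.Finite)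
    (hc : F₁.ncard = F₂.ncard)
    (h : xrayDiff 𝒮 F₁ F₂ < 2 * (m - 1)) :
    TomEq 𝒮 F₁ F₂ := by
  classical
  by_contra hTom
  obtain ⟨S₀, hS₀, hbad⟩ : ∃ S₀ ∈ 𝒮, ¬ XrayEq S₀ F₁ F₂ := by simpa [TomEq] using hTom
  set X₁ := h₁.toFinset
  set X₂ := h₂.toFinset
  have hcard' : #X₁ = #X₂ := by
    rwa [← Set.ncard_eq_toFinset_card F₁ h₁, ← Set.ncard_eq_toFinset_card F₂ h₂]
  have hne (S) (hS : ¬ XrayEq S F₁ F₂) : ∃ T, fiberDiff S.mkQ X₁ X₂ T ≠ 0 := by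
    simpa [xrayEq_iff_forall_fiberDiff_eq_zero h₁ h₂] using hS
  obtain ⟨T₀, hT₀⟩ := hne S₀ hbad
  set 𝒢 := {S ∈ hfin.toFinset | XrayEq S F₁ F₂}
  have h𝒢 (S) (hS : S ∈ 𝒢) : Module.finrank ℝ S = 1 ∧ XrayEq S F₁ F₂ :=
    ⟨hdim S (hfin.mem_toFinset.1 (mem_filter.1 hS).1), (mem_filter.1 hS).2⟩
  have hS₀_jump : 2 * #𝒢 ≤ fiberDist S₀.mkQ X₁ X₂ :=
    two_mul_card_le_fiberDist X₁ X₂ 𝒢 (fun S hS => (h𝒢 S hS).1)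
      (fun S hS => (xrayEq_iff_forall_fiberDiff_eq_zero h₁ h₂).1 (h𝒢 S hS).2) S₀
      (fun S hS hle => hbad (Submodule.eq_of_le_of_finrank_eq hle
        (by rw [(h𝒢 S hS).1, hdim S₀ hS₀]) ▸ (h𝒢 S hS).2)) hT₀
  have hbad_jump (S) (_ : S ∈ hfin.toFinset) (hS : ¬ XrayEq S F₁ F₂) :
      2 ≤ fiberDist S.mkQ X₁ X₂ :=
    (hne S hS).elim fun _ => two_le_fiberDist hcard'
  have hjump := two_mul_card_sub_one_le_sum _ (hfin.mem_toFinset.2 hS₀) hbad hS₀_jump hbad_jump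
  rw [← Set.ncard_eq_toFinset_card 𝒮 hfin, hcard, ← xrayDiff_eq_sum_fiberDist hfin h₁ h₂] at hjump
  omega
end

section
/- (Prouhet) Let k ∈ ℕ and let s₂(p) denote the binary digit sum of p ∈ ℕ₀. Set X = {p ∈ {0, 1, …, 2^{k+1} − 1} : s₂(p) is even} and Y = {p ∈ {0, 1, …, 2^{k+1} − 1} : s₂(p) is odd}. Then |X| = |Y| = 2^k and Σ_{x ∈ X} x^j = Σ_{y ∈ Y} y^j for every j with 1 ≤ j ≤ k; i.e., (X, Y) is a (k, 2^k)-solution of the Prouhet–Tarry–Escott problem. -/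
/-!
Write `ε(p) = (-1)^{s₂(p)}`. For `p < 2ⁿ` the binary digits of `p + 2ⁿ` are those of `p` followed by
a single extra `1`, so `ε(p + 2ⁿ) = -ε(p)` and
`∑_{p < 2ⁿ⁺¹} ε(p) P(p) = ∑_{p < 2ⁿ} ε(p) (P(p) - P(p + 2ⁿ))`.
Since `P - P(· + 2ⁿ)` has smaller degree than `P`, induction on `n` shows that `ε` annihilates every
polynomial of degree `< n` on `[0, 2ⁿ)`. The theorem is the case `P = Xʲ`, `n = k + 1`; the case
`j = 0` gives `|X| = |Y|`.
-/

open Finset Polynomial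

theorem Polynomial.degree_sub_taylor_lt {R : Type*} [Ring R] {P : R[X]} (hP : P ≠ 0) (r : R) :
    (P - taylor r P).degree < P.degree :=
  degree_sub_lt_left (degree_taylor P r).symm hP (leadingCoeff_taylor r P).symm

theorem Nat.digits_two_sum_add_two_pow {n p : ℕ} (hp : p < 2 ^ n) :
    (Nat.digits 2 (p + 2 ^ n)).sum = (Nat.digits 2 p).sum + 1 := by
  have hlen : (Nat.digits 2 p).length ≤ n := (Nat.digits_length_le_iff one_lt_two p).2 hp
  have h := Nat.digits_append_zeroes_append_digits (b := 2) (k := n - (Nat.digits 2 p).length)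
    (m := 1) (n := p) one_lt_two one_pos
  rw [Nat.add_sub_cancel' hlen, mul_one] at h
  rw [← h]
  simp

section ThueMorse

variable {R : Type*} [Ring R]

variable (R) in
def thueMorseSign (p : ℕ) : R := (-1) ^ (Nat.digits 2 p).sum

theorem thueMorseSign_add_two_pow {n p : ℕ} (hp : p < 2 ^ n) :
    thueMorseSign R (p + 2 ^ n) = -thueMorseSign R p := by
  rw [thueMorseSign, thueMorseSign, Nat.digits_two_sum_add_two_pow hp, pow_succ, mul_neg_one]

theorem sum_range_two_pow_succ_thueMorseSign_mul (n : ℕ) (f : ℕ → R) :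
    ∑ p ∈ range (2 ^ (n + 1)), thueMorseSign R p * f p =
      ∑ p ∈ range (2 ^ n), thueMorseSign R p * (f p - f (p + 2 ^ n)) := by
  rw [pow_succ, mul_two, sum_range_add, ← sum_add_distrib]
  refine sum_congr rfl fun p hp => ?_
  rw [add_comm (2 ^ n) p, thueMorseSign_add_two_pow (mem_range.1 hp), neg_mul, mul_sub,
    sub_eq_add_neg]

theorem sum_filter_even_sub_sum_filter_odd (s : Finset ℕ) (f : ℕ → R) :
    ∑ p ∈ s with Even (Nat.digits 2 p).sum, f p - ∑ p ∈ s with Odd (Nat.digits 2 p).sum, f p =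
      ∑ p ∈ s, thueMorseSign R p * f p := by
  rw [← sum_filter_add_sum_filter_not s (fun p => Even (Nat.digits 2 p).sum), sub_eq_add_neg,
    ← sum_neg_distrib]
  simp only [Nat.not_even_iff_odd]
  congr 1
  · exact sum_congr rfl fun p hp => by rw [thueMorseSign, (mem_filter.1 hp).2.neg_one_pow, one_mul]
  · exact sum_congr rfl fun p hp => by
      rw [thueMorseSign, (mem_filter.1 hp).2.neg_one_pow, neg_one_mul]

end ThueMorse

theorem sum_range_two_pow_thueMorseSign_mul_eval_eq_zero {R : Type*} [CommRing R] {n : ℕ}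
    {P : R[X]} (hP : P.degree < n) :
    ∑ p ∈ range (2 ^ n), thueMorseSign R p * P.eval (p : R) = 0 := by
  induction n generalizing P with
  | zero => simp_all
  | succ n ih =>
    rcases eq_or_ne P 0 with rfl | hP0
    · simp
    have hdiff : (P - taylor ((2 : R) ^ n) P).degree < n :=
      (degree_sub_taylor_lt hP0 _).trans_le (Order.le_of_lt_succ (by exact_mod_cast hP))
    rw [sum_range_two_pow_succ_thueMorseSign_mul]
    simpa [taylor_eval] using ih hdiff

theorem sum_pow_filter_even_eq_sum_pow_filter_odd {n j : ℕ} (hj : j < n) :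
    ∑ p ∈ range (2 ^ n) with Even (Nat.digits 2 p).sum, p ^ j =
      ∑ p ∈ range (2 ^ n) with Odd (Nat.digits 2 p).sum, p ^ j := by
  have h := sum_filter_even_sub_sum_filter_odd (range (2 ^ n)) fun p => (p : ℤ) ^ j
  have h_zero := sum_range_two_pow_thueMorseSign_mul_eval_eq_zero (R := ℤ) (P := X ^ j)
    (by simpa using hj)
  simp only [eval_pow, eval_X] at h_zero
  rw [h_zero, sub_eq_zero] at h
  exact_mod_cast h

theorem prouhet_general
    (k : ℕ)
    (X Y : Finset ℕ)
    (hX : X = (Finset.range (2 ^ (k + 1))).filter fun p => Even (Nat.digits 2 p).sum)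
    (hY : Y = (Finset.range (2 ^ (k + 1))).filter fun p => Odd (Nat.digits 2 p).sum) :
    X.card = 2 ^ k ∧ Y.card = 2 ^ k ∧
    ∀ j : ℕ, 1 ≤ j → j ≤ k → ∑ x ∈ X, x ^ j = ∑ y ∈ Y, y ^ j := by
  have hcard : X.card + Y.card = 2 ^ (k + 1) := by
    simp only [hX, hY, ← Nat.not_even_iff_odd, card_filter_add_card_filter_not, card_range]
  have hcard_eq : X.card = Y.card := by
    simpa [hX, hY] using sum_pow_filter_even_eq_sum_pow_filter_odd (n := k + 1) (j := 0) k.succ_pos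
  refine ⟨by omega, by omega, fun j _ hjk => ?_⟩
  rw [hX, hY]
  exact sum_pow_filter_even_eq_sum_pow_filter_odd (Nat.lt_succ_of_le hjk)

theorem prouhet
    (k : ℕ) (hk : 1 ≤ k)
    (X Y : Finset ℕ)
    (hX : X = (Finset.range (2 ^ (k + 1))).filter fun p => Even (Nat.digits 2 p).sum)
    (hY : Y = (Finset.range (2 ^ (k + 1))).filter fun p => Odd (Nat.digits 2 p).sum) :
    X.card = 2 ^ k ∧ Y.card = 2 ^ k ∧
    ∀ j : ℕ, 1 ≤ j → j ≤ k → ∑ x ∈ X, x ^ j = ∑ y ∈ Y, y ^ j :=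
  prouhet_general k X Y hX hY
end
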